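/- In an ordered Θ_k-graph G = (V, E) with k ≥ 2 on n vertices, for every vertex t ∈ V there exist m ≤ n and vertices u₁ = v₁, u₂, …, u_m = t such that ρ(u₁) < ρ(u₂) < ⋯ < ρ(u_m), {u_{i−1}, u_i} ∈ E for every 2 ≤ i ≤ m, and for every 2 ≤ i ≤ m the vertex u_{i−1} lies in the interior of the cone of u_i containing v₁ (equivalently, u_{i−1} is the ordered Θ-routing step target of u_i towards v₁). That is, the reverse of the ordered Θ-routing path from t to v₁ is a path from v₁ to t of at most n vertices with monotonically increasing insertion orders. -/

import Mathlib

/-!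
Ordered Θ_k-graphs: common definitions.

Points live in the plane, modelled as `ℂ`.  For a point `u`, the plane is
partitioned into `k` cones of aperture `θ = 2π/k`; cone `j` has as bisector the
ray from `u` in direction `exp((π/2 - j·θ)·I)` (cone `0` points upwards, cones
are numbered clockwise).  A point `w ≠ u` lies (in the interior of) cone `j` of
`u` iff the angle between `w - u` and the bisector is `< θ/2`.  `projDist`
measures the length of the orthogonal projection of `w - u` onto the bisector
of cone `j`.  Insertion orders: vertex `i : Fin n` is the `(i+1)`-st inserted
vertex, so `ρ(v) < ρ(u)` is `v < u`.
-/

namespace OrderedTheta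

noncomputable def theta (k : ℕ) : ℝ := 2 * Real.pi / k

/-- Unit vector along the bisector of the `j`-th cone. -/
noncomputable def dir (k j : ℕ) : ℂ :=
  Complex.exp ((Real.pi / 2 - j * theta k) * Complex.I)

/-- `w` lies in the (open) cone number `j` of apex `u`. -/
def inCone (k : ℕ) (u w : ℂ) (j : ℕ) : Prop :=
  w ≠ u ∧ |Complex.arg ((w - u) / dir k j)| < theta k / 2

/-- The distance `|u w'|` from `u` to the orthogonal projection `w'` of `w`
onto the bisector of cone `j` of `u` (for `w` in the open cone `j` this equals
the signed component of `w - u` along the bisector direction). -/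
noncomputable def projDist (k : ℕ) (u w : ℂ) (j : ℕ) : ℝ :=
  ((w - u) * (starRingEnd ℂ) (dir k j)).re

/-- A sequence of `n` distinct points in the plane, in general position, to be
inserted in the order of their indices; `V i` is the `(i+1)`-st inserted point. -/
structure Config (k n : ℕ) : Type where
  two_le_k : 2 ≤ k
  V : Fin n → ℂ
  inj : Function.Injective V
  /-- no previously inserted point lies on a boundary ray of a cone of `V i`:
  every earlier point lies in the open cone of some index `c < k`. -/
  gp_cone : ∀ i j : Fin n, j < i → ∃ c < k, inCone k (V i) (V j) c
  /-- two distinct earlier points lying in a common cone of `V i` have distinct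
  bisector-projection distances from `V i`. -/
  gp_dist : ∀ i j l : Fin n, j < i → l < i → j ≠ l →
    ∀ c < k, inCone k (V i) (V j) c → inCone k (V i) (V l) c →
      projDist k (V i) (V j) c ≠ projDist k (V i) (V l) c

/-- The edge created upon insertion of `i`, towards the earlier point `j`:
`j` is inserted before `i`, and among all earlier points in the cone of `i`
containing `j`, `j` is closest (measured along the bisector). -/
def EdgeDir {k n : ℕ} (C : Config k n) (i j : Fin n) : Prop :=
  j < i ∧ ∃ c < k, inCone k (C.V i) (C.V j) c ∧
    ∀ l : Fin n, l < i → inCone k (C.V i) (C.V l) c →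
      projDist k (C.V i) (C.V j) c ≤ projDist k (C.V i) (C.V l) c

/-- The ordered Θ_k-graph of a configuration, as an undirected simple graph on
`Fin n`. -/
def graph {k n : ℕ} (C : Config k n) : SimpleGraph (Fin n) where
  Adj i j := EdgeDir C i j ∨ EdgeDir C j i
  symm := ⟨fun _ _ hij => hij.symm⟩
  loopless := by
    constructor
    intro i h
    rcases h with h | h <;> exact absurd h.1 (lt_irrefl i)

/-- `x` lies in the canonical triangle `Δ u w`: `x` lies in the cone of `u`
containing `w` and its projection onto the bisector is at distance at most
`|u w'|` from `u`. -/
def inCanonical (k : ℕ) (u w x : ℂ) : Prop :=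
  ∃ c < k, inCone k u w c ∧ inCone k u x c ∧ projDist k u x c ≤ projDist k u w c

/-- `v` is the target of an ordered Θ-routing step from `u` towards the first
inserted vertex `v₁`: it is `v₁` itself if `{u, v₁}` is an edge, and otherwise
the neighbour of `u` of smaller insertion order lying in the canonical triangle
`Δ u v₁` whose bisector projection is closest to `u`. -/
def IsRoutingStep {k n : ℕ} (C : Config k n) (hn : 0 < n) (u v : Fin n) : Prop :=
  ((graph C).Adj u ⟨0, hn⟩ ∧ v = ⟨0, hn⟩) ∨
  (¬ (graph C).Adj u ⟨0, hn⟩ ∧ (graph C).Adj u v ∧ v < u ∧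
    inCanonical k (C.V u) (C.V ⟨0, hn⟩) (C.V v) ∧
    ∀ w : Fin n, (graph C).Adj u w → w < u →
      inCanonical k (C.V u) (C.V ⟨0, hn⟩) (C.V w) →
      ∀ c < k, inCone k (C.V u) (C.V v) c → inCone k (C.V u) (C.V w) c →
        projDist k (C.V u) (C.V v) c ≤ projDist k (C.V u) (C.V w) c)

/-- `u'` is an exploration candidate neighbour of `u` (with respect to the
destination `t`): `u'` is a neighbour of `u` with `ρ(u) < ρ(u') ≤ ρ(t)` such
that `u` lies in the interior of the cone of `u'` containing `v₁`. -/
def ExplCand {k n : ℕ} (C : Config k n) (hn : 0 < n) (t u u' : Fin n) : Prop :=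
  (graph C).Adj u u' ∧ u < u' ∧ u' ≤ t ∧
  ∃ c < k, inCone k (C.V u') (C.V ⟨0, hn⟩) c ∧ inCone k (C.V u') (C.V u) c

/-- The exploration space `S(v₁)`: the smallest set of vertices containing `v₁`
and closed under taking exploration candidate neighbours. -/
inductive InExplSpace {k n : ℕ} (C : Config k n) (hn : 0 < n) (t : Fin n) : Fin n → Prop
  | base : InExplSpace C hn t ⟨0, hn⟩
  | step {u u' : Fin n} :
      InExplSpace C hn t u → ExplCand C hn t u u' → InExplSpace C hn t u'

/-- The label of a vertex: its coordinates together with its insertion order. -/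
noncomputable def label {k n : ℕ} (C : Config k n) (v : Fin n) : ℂ × ℕ :=
  (C.V v, (v : ℕ) + 1)

/-- The vertices at graph distance at most `h` from `u`. -/
def ball {k n : ℕ} (C : Config k n) (u : Fin n) (h : ℕ) : Set (Fin n) :=
  {v | ∃ p : (graph C).Walk u v, p.length ≤ h}

/-- The data visible to an `h`-local algorithm: a labelled vertex set together
with a labelled edge set. -/
abbrev LocalView : Type := Set (ℂ × ℕ) × Set ((ℂ × ℕ) × (ℂ × ℕ))

/-- The `h`-neighbourhood `B_h(u)`: the induced labelled subgraph on all
vertices at graph distance at most `h` from `u`. -/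
noncomputable def view {k n : ℕ} (C : Config k n) (u : Fin n) (h : ℕ) : LocalView :=
  (label C '' ball C u h,
   {e | ∃ a ∈ ball C u h, ∃ b ∈ ball C u h,
      (graph C).Adj a b ∧ e = (label C a, label C b)})

/-- One step of the descending algorithm `A^down`: move to the neighbour of
minimum insertion order among the neighbours of smaller insertion order. -/
def AdownStep {k n : ℕ} (C : Config k n) (u v : Fin n) : Prop :=
  (graph C).Adj u v ∧ v < u ∧ ∀ v' : Fin n, (graph C).Adj u v' → v' < u → v ≤ v'

/-- The angle of the vector `v - u`, measured counterclockwise from the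
positive horizontal direction, normalised to `[0, 2π)`. -/
noncomputable def alpha (u v : ℂ) : ℝ :=
  if 0 ≤ Complex.arg (v - u) then Complex.arg (v - u)
  else Complex.arg (v - u) + 2 * Real.pi

/-- One step of the algorithm `A^up(v₁, t)` on states
`(current vertex, previous vertex, exploration bit)`. -/
def AupStep {k n : ℕ} (C : Config k n) (hn : 0 < n) (t : Fin n)
    (s s' : Fin n × Option (Fin n) × Bool) : Prop :=
  s.1 ≠ t ∧
  ((s.2.2 = true ∧
     ((∃ v : Fin n, ExplCand C hn t s.1 v ∧
         (∀ v' : Fin n, ExplCand C hn t s.1 v' →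
           alpha (C.V s.1) (C.V v) ≤ alpha (C.V s.1) (C.V v')) ∧
         s' = (v, some s.1, true)) ∨
      ((¬ ∃ v : Fin n, ExplCand C hn t s.1 v) ∧
        ∃ u' : Fin n, IsRoutingStep C hn s.1 u' ∧ s' = (u', some s.1, false)))) ∨
   (s.2.2 = false ∧ ∃ p : Fin n, s.2.1 = some p ∧
     ((∃ v : Fin n,
         (ExplCand C hn t s.1 v ∧ alpha (C.V s.1) (C.V p) < alpha (C.V s.1) (C.V v)) ∧
         (∀ v' : Fin n, ExplCand C hn t s.1 v' →
           alpha (C.V s.1) (C.V p) < alpha (C.V s.1) (C.V v') →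
           alpha (C.V s.1) (C.V v) ≤ alpha (C.V s.1) (C.V v')) ∧
         s' = (v, some s.1, true)) ∨
      ((¬ ∃ v : Fin n, ExplCand C hn t s.1 v ∧
          alpha (C.V s.1) (C.V p) < alpha (C.V s.1) (C.V v)) ∧
        ∃ u' : Fin n, IsRoutingStep C hn s.1 u' ∧ s' = (u', some s.1, false)))))

/-- The point sequence defining `L_h^k` (0-based index `j` is the `(j+1)`-st
inserted point `v_{j+1}`). -/
noncomputable def Lpt (h k : ℕ) (ε : ℝ) (j : ℕ) : ℂ :=
  if j = 0 then 0
  else if j = 2 * h + 1 then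
    ((-2 : ℝ) : ℂ) + ((-(2 * (h : ℝ)) * ε : ℝ) : ℂ) * Complex.I
  else if j = 2 * h + 2 then
    ((-2 / Real.tan (theta k / 2) - 3 * (h : ℝ) * ε : ℝ) : ℂ) * Complex.I
  else if j % 2 = 1 then
    (((((j + 1) / 2 : ℕ) : ℝ) / (h : ℝ) : ℝ) + ((-(((j + 1) / 2 : ℕ) : ℝ) * ε : ℝ) : ℂ) * Complex.I)
  else
    ((-(((j / 2 : ℕ) : ℝ) / (h : ℝ)) : ℝ) + ((-(((j / 2 : ℕ) : ℝ)) * ε : ℝ) : ℂ) * Complex.I)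

/-- The point sequence defining `R_h^k`: identical to the one for `L_h^k`
except that `v_{2h+2}` is placed at `(2, -2hε)` instead of `(-2, -2hε)`. -/
noncomputable def Rpt (h k : ℕ) (ε : ℝ) (j : ℕ) : ℂ :=
  if j = 2 * h + 1 then ((2 : ℝ) : ℂ) + ((-(2 * (h : ℝ)) * ε : ℝ) : ℂ) * Complex.I
  else Lpt h k ε j

/-!
If `t ≠ v₁`, then `v₁` lies in an open cone `c` of `t` by general position. Among the points
inserted before `t` in cone `c`, the one closest to `t` along the bisector is joined to `t` by the
edge created when `t` was inserted; it lies in the cone of `t` containing `v₁` and has smaller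
insertion order. Repeating this from that point strictly decreases the insertion order, so `v₁` is
reached after at most `ρ(t) - 1` steps, and reading the steps backwards gives the path.
-/

theorem exists_seq_chain_of_descent {α : Type*} (r : α → α → Prop) (f : α → ℕ) (a : α)
    (descent : ∀ x ≠ a, ∃ y, r y x ∧ f y < f x) (x : α) :
    ∃ m ≤ f x, ∃ u : ℕ → α, u 0 = a ∧ u m = x ∧ ∀ i < m, r (u i) (u (i + 1)) := by
  induction x using (measure f).wf.induction with
  | _ x ih =>
  by_cases hx : x = a
  · exact ⟨0, Nat.zero_le _, fun _ => a, rfl, hx.symm, fun i hi => absurd hi (Nat.not_lt_zero i)⟩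
  obtain ⟨y, hyx, hfy⟩ := descent x hx
  obtain ⟨m, hm, u, hu0, hum, hu⟩ := ih y hfy
  refine ⟨m + 1, by omega, fun i => if i = m + 1 then x else u i, by simp [hu0], by simp,
    fun i hi => ?_⟩
  rcases Nat.lt_succ_iff_lt_or_eq.mp hi with hi | rfl
  · dsimp only
    rw [if_neg (by omega), if_neg (by omega)]
    exact hu i hi
  · simpa [hum] using hyx

section

variable {k n : ℕ} (C : Config k n)

theorem exists_edgeDir_inCone {i l : Fin n} (hli : l < i) {c : ℕ} (hc : c < k)
    (hl : inCone k (C.V i) (C.V l) c) :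
    ∃ j, EdgeDir C i j ∧ inCone k (C.V i) (C.V j) c := by
  classical
  let S := Finset.univ.filter fun l => l < i ∧ inCone k (C.V i) (C.V l) c
  obtain ⟨j, hjS, hj_min⟩ :=
    S.exists_min_image (fun l => projDist k (C.V i) (C.V l) c) ⟨l, by simp [S, hli, hl]⟩
  obtain ⟨hji, hj⟩ : j < i ∧ inCone k (C.V i) (C.V j) c := by simpa [S] using hjS
  exact ⟨j, ⟨hji, c, hc, hj, fun l hli hl => hj_min l (by simp [S, hli, hl])⟩, hj⟩

def ConeStep (hn : 0 < n) (v w : Fin n) : Prop :=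
  (graph C).Adj v w ∧ v < w ∧
    ∃ c < k, inCone k (C.V w) (C.V ⟨0, hn⟩) c ∧ inCone k (C.V w) (C.V v) c

theorem exists_coneStep (hn : 0 < n) {t : Fin n} (ht : t ≠ ⟨0, hn⟩) :
    ∃ v, ConeStep C hn v t := by
  have h0t : (⟨0, hn⟩ : Fin n) < t := lt_of_le_of_ne (Fin.mk_le_of_le_val (Nat.zero_le _)) ht.symm
  obtain ⟨c, hc, h0⟩ := C.gp_cone t ⟨0, hn⟩ h0t
  obtain ⟨v, hvt, hv⟩ := exists_edgeDir_inCone C h0t hc h0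
  exact ⟨v, Or.inr hvt, hvt.1, c, hc, h0, hv⟩

end

/-- In an ordered Θ_k-graph on `n` vertices, for every vertex
`t` there is a path from `v₁` to `t` of at most `n` vertices with strictly
increasing insertion orders such that each vertex of the path lies in the
interior of the cone of its successor containing `v₁` (the reverse of the
ordered Θ-routing path from `t` to `v₁`). -/
theorem reverse_routing_path {k n : ℕ} (C : Config k n) (hn : 0 < n)
    (t : Fin n) :
    ∃ m : ℕ, m + 1 ≤ n ∧ ∃ u : ℕ → Fin n, u 0 = ⟨0, hn⟩ ∧ u m = t ∧
      ∀ i < m, (graph C).Adj (u i) (u (i + 1)) ∧ u i < u (i + 1) ∧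
        ∃ c < k, inCone k (C.V (u (i + 1))) (C.V ⟨0, hn⟩) c ∧
          inCone k (C.V (u (i + 1))) (C.V (u i)) c := by
  have descent : ∀ w ≠ (⟨0, hn⟩ : Fin n), ∃ v, ConeStep C hn v w ∧ (v : ℕ) < w := fun w hw =>
    (exists_coneStep C hn hw).imp fun _ hv => ⟨hv, hv.2.1⟩
  obtain ⟨m, hm, u, hu0, hum, hu⟩ := exists_seq_chain_of_descent _ Fin.val _ descent t
  exact ⟨m, by omega, u, hu0, hum, hu⟩

end OrderedTheta
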